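/- For every x ∈ ℂ, M · R̂(x) · M⁻¹ = (1+i) · diag(x−i, x−i, 1−ix, 1−ix); in particular the Baxterised braid matrix R̂(x) is diagonalised by the same matrix M for all values of the spectral parameter x. -/
import Mathlib

noncomputable section
open Matrix Complex

/-- The Baxterised braid matrix of S03 (overall scalar factor 1/√(2x) omitted). -/
def RhatX (x : ℂ) : Matrix (Fin 4) (Fin 4) ℂ :=
  !![x+1, 0, 0, 1-x;
     0, x+1, x-1, 0;
     0, 1-x, x+1, 0;
     x-1, 0, 0, x+1]

/-- The diagonaliser `M`. -/
def Mdiag : Matrix (Fin 4) (Fin 4) ℂ :=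
  (Real.sqrt 2 : ℂ)⁻¹ • !![1, 0, 0, I;
                           0, 1, -I, 0;
                           0, -I, 1, 0;
                           I, 0, 0, 1]

lemma inv_sqrt2_sq : ((Real.sqrt 2 : ℝ) : ℂ)⁻¹ * ((Real.sqrt 2 : ℝ) : ℂ)⁻¹ = 2⁻¹ := by
  rw [← mul_inv]; norm_cast
  rw [Real.mul_self_sqrt (by norm_num : (0:ℝ) ≤ 2)]; norm_num

lemma Mdiag_inv : Mdiag⁻¹ = (Real.sqrt 2 : ℂ)⁻¹ • !![1, 0, 0, -I;
                           0, 1, I, 0;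
                           0, I, 1, 0;
                           -I, 0, 0, 1] := by
  apply Matrix.inv_eq_right_inv
  ext i j
  fin_cases i <;> fin_cases j <;>
    simp [Mdiag, Matrix.mul_apply, Fin.sum_univ_four, Matrix.one_apply] <;>
    first
    | ring1
    | linear_combination (1 - I*I) * inv_sqrt2_sq - (2:ℂ)⁻¹ * Complex.I_mul_I

set_option maxHeartbeats 1000000 in
/-- For every `x`, `M · R̂(x) · M⁻¹ = (1+i) · diag(x−i, x−i, 1−ix, 1−ix)`:
the Baxterised braid matrix is diagonalised by the same matrix `M` for all `x`. -/
theorem Mdiag_diagonalises_RhatX (x : ℂ) :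
    Mdiag * RhatX x * Mdiag⁻¹ =
      (1 + I) • Matrix.diagonal ![x - I, x - I, 1 - I * x, 1 - I * x] := by
  rw [Mdiag_inv, Mdiag, Matrix.smul_mul, Matrix.smul_mul, Matrix.mul_smul,
    smul_smul, inv_sqrt2_sq]
  ext i j
  fin_cases i <;> fin_cases j <;>
    simp [RhatX, Matrix.mul_apply, Fin.sum_univ_four, Matrix.diagonal] <;>
    first
    | ring1
    | linear_combination ((1-x)/2) * Complex.I_mul_I
    | linear_combination (1-x) * Complex.I_mul_I
    | linear_combination (x-1) * Complex.I_mul_I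
    | linear_combination ((x-1)/2) * Complex.I_mul_I
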